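/- arXiv:1609.06655 — 4 statements merged into one kernel-verified Lean document; each statement's English description precedes it below -/
import Mathlib

section
/- If u_n → u almost everywhere and ‖u_n‖_{L^p} ≤ M < ∞ for all n, for some 1 ≤ p < ∞, then ‖u_n‖_{L^p}^p − ‖u_n − u‖_{L^p}^p → ‖u‖_{L^p}^p (Brezis–Lieb lemma for powers). -/
/-!
Put `v n := u n - f`, so `v n → 0` a.e. The elementary inequality
`|(|a + b|^p - |a|^p - |b|^p)| ≤ ε |a|^p + C_ε |b|^p` dominates `(|g n| - ε |v n|^p)⁺`, where
`g n := |v n + f|^p - |v n|^p - |f|^p`, by `C_ε |f|^p`, so dominated convergence kills it. What is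
left of `∫ |g n|` is at most `ε ∫ |v n|^p ≤ ε (M + ‖f‖_p)^p`, with `f ∈ Lᵖ` by Fatou.
-/

open MeasureTheory Filter Topology

noncomputable def brezisLiebDefect (p a b : ℝ) : ℝ := |a + b| ^ p - |a| ^ p - |b| ^ p

section Elementary

variable {p : ℝ}

lemma brezisLiebDefect_zero_left (hp : p ≠ 0) (b : ℝ) : brezisLiebDefect p 0 b = 0 := by
  simp [brezisLiebDefect, Real.zero_rpow hp]

lemma continuous_brezisLiebDefect (hp : 0 ≤ p) (b : ℝ) :
    Continuous fun a => brezisLiebDefect p a b := by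
  have hcont : Continuous fun t : ℝ => |t| ^ p := continuous_abs.rpow_const fun _ => Or.inr hp
  unfold brezisLiebDefect
  fun_prop

lemma add_rpow_le_mul_rpow_add_mul_rpow (hp : 0 ≤ p) {δ x y : ℝ} (hδ : 0 < δ) (hx : 0 ≤ x)
    (hy : 0 ≤ y) : (x + y) ^ p ≤ (1 + δ) ^ p * x ^ p + (1 + δ⁻¹) ^ p * y ^ p := by
  rcases le_or_gt y (δ * x) with h | h
  · calc (x + y) ^ p ≤ ((1 + δ) * x) ^ p := by gcongr; linarith
      _ = (1 + δ) ^ p * x ^ p := Real.mul_rpow (by positivity) hx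
      _ ≤ _ := le_add_of_nonneg_right (by positivity)
  · have hx' : x ≤ δ⁻¹ * y := by rw [le_inv_mul_iff₀ hδ]; exact h.le
    calc (x + y) ^ p ≤ ((1 + δ⁻¹) * y) ^ p := by gcongr; linarith
      _ = (1 + δ⁻¹) ^ p * y ^ p := Real.mul_rpow (by positivity) hy
      _ ≤ _ := le_add_of_nonneg_left (by positivity)

lemma exists_add_rpow_le_one_add_mul_rpow (hp : 0 ≤ p) {η : ℝ} (hη : 0 < η) :
    ∃ C, 0 ≤ C ∧ ∀ x y : ℝ, 0 ≤ x → 0 ≤ y → (x + y) ^ p ≤ (1 + η) * x ^ p + C * y ^ p := by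
  have hlim : Tendsto (fun δ : ℝ => (1 + δ) ^ p) (𝓝[>] 0) (𝓝 1) := by
    have := ((by fun_prop : Continuous fun δ : ℝ => 1 + δ).rpow_const fun _ => Or.inr hp).tendsto 0
    simpa using this.mono_left nhdsWithin_le_nhds
  obtain ⟨δ, hδη, hδ⟩ :=
    ((hlim.eventually (gt_mem_nhds (lt_add_of_pos_right 1 hη))).and self_mem_nhdsWithin).exists
  refine ⟨(1 + δ⁻¹) ^ p, by positivity, fun x y hx hy => ?_⟩
  calc (x + y) ^ p ≤ (1 + δ) ^ p * x ^ p + (1 + δ⁻¹) ^ p * y ^ p :=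
        add_rpow_le_mul_rpow_add_mul_rpow hp hδ hx hy
    _ ≤ (1 + η) * x ^ p + (1 + δ⁻¹) ^ p * y ^ p := by gcongr

lemma exists_abs_brezisLiebDefect_le (hp : 0 ≤ p) {ε : ℝ} (hε : 0 < ε) :
    ∃ C, ∀ a b : ℝ, |brezisLiebDefect p a b| ≤ ε * |a| ^ p + C * |b| ^ p := by
  set η := min (ε / 2) 1
  have hη : 0 < η := by positivity
  obtain ⟨C, hC, hle⟩ := exists_add_rpow_le_one_add_mul_rpow hp hη
  have hηε : η ≤ ε / 2 := min_le_left _ _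
  have hη1 : η ≤ 1 := min_le_right _ _
  refine ⟨2 * C + 1, fun a b => ?_⟩
  have hS : |a + b| ^ p ≤ (1 + η) * |a| ^ p + C * |b| ^ p := by
    grw [abs_add_le]
    exact hle _ _ (abs_nonneg a) (abs_nonneg b)
  have hA : |a| ^ p ≤ (1 + η) * |a + b| ^ p + C * |b| ^ p := by
    calc |a| ^ p = |(a + b) - b| ^ p := by rw [add_sub_cancel_right]
      _ ≤ (|a + b| + |b|) ^ p := by grw [abs_sub]
      _ ≤ _ := hle _ _ (abs_nonneg _) (abs_nonneg b)
  have hA0 : 0 ≤ |a| ^ p := by positivity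
  have hB0 : 0 ≤ |b| ^ p := by positivity
  have hCB : 0 ≤ C * |b| ^ p := by positivity
  rw [brezisLiebDefect, abs_sub_le_iff]
  constructor
  · nlinarith
  · have hηη : η * (1 + η) ≤ ε := by nlinarith
    nlinarith [mul_le_mul_of_nonneg_left hS hη.le, mul_le_mul_of_nonneg_right hηη hA0,
      mul_le_mul_of_nonneg_right hη1 hCB]

end Elementary

lemma tendsto_nhds_zero_of_forall_abs_le_add {ι : Type*} {l : Filter ι} {a : ι → ℝ}
    (h : ∀ ε > 0, ∃ b : ι → ℝ, Tendsto b l (𝓝 0) ∧ ∀ i, |a i| ≤ b i + ε) :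
    Tendsto a l (𝓝 0) := by
  refine Metric.tendsto_nhds.2 fun ε hε => ?_
  obtain ⟨b, hb, hab⟩ := h (ε / 2) (half_pos hε)
  filter_upwards [hb.eventually_lt_const (half_pos hε)] with i hi
  rw [Real.dist_0_eq_abs]
  linarith [hab i]

namespace MeasureTheory

variable {α : Type*} [MeasurableSpace α] {μ : Measure α} {p : ℝ}

lemma integral_abs_rpow_eq_lpNorm_rpow (hp : 0 < p) {g : α → ℝ} (hg : AEStronglyMeasurable g μ) :
    ∫ x, |g x| ^ p ∂μ = lpNorm g (ENNReal.ofReal p) μ ^ p := by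
  rw [lpNorm_eq_integral_norm_rpow_toReal (by simpa using hp) ENNReal.ofReal_ne_top hg,
    ENNReal.toReal_ofReal hp.le, Real.rpow_inv_rpow (integral_nonneg fun _ => by positivity) hp.ne']
  rfl

lemma MemLp.integrable_abs_rpow (hp : 0 < p) {g : α → ℝ} (hg : MemLp g (ENNReal.ofReal p) μ) :
    Integrable (fun x => |g x| ^ p) μ := by
  simpa [ENNReal.toReal_ofReal hp.le] using
    hg.integrable_norm_rpow (by simpa using hp) ENNReal.ofReal_ne_top

lemma MemLp.integrable_brezisLiebDefect (hp : 0 < p) {g f : α → ℝ}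
    (hg : MemLp g (ENNReal.ofReal p) μ) (hf : MemLp f (ENNReal.ofReal p) μ) :
    Integrable (fun x => brezisLiebDefect p (g x) (f x)) μ :=
  (((hg.add hf).integrable_abs_rpow hp).sub (hg.integrable_abs_rpow hp)).sub
    (hf.integrable_abs_rpow hp)

lemma integral_brezisLiebDefect (hp : 0 < p) {g f : α → ℝ} (hg : MemLp g (ENNReal.ofReal p) μ)
    (hf : MemLp f (ENNReal.ofReal p) μ) :
    ∫ x, brezisLiebDefect p (g x) (f x) ∂μ =
      ∫ x, |g x + f x| ^ p ∂μ - ∫ x, |g x| ^ p ∂μ - ∫ x, |f x| ^ p ∂μ := by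
  have hgf : Integrable (fun x => |g x + f x| ^ p) μ := (hg.add hf).integrable_abs_rpow hp
  have hg' := hg.integrable_abs_rpow hp
  rw [← integral_sub hgf hg', ← integral_sub (f := fun x => |g x + f x| ^ p - |g x| ^ p)
    (hgf.sub hg') (hf.integrable_abs_rpow hp)]
  rfl

variable {v : ℕ → α → ℝ} {f : α → ℝ}

lemma tendsto_integral_max_abs_brezisLiebDefect_sub_zero (hp : 0 < p)
    (hv : ∀ n, MemLp (v n) (ENNReal.ofReal p) μ) (hf : MemLp f (ENNReal.ofReal p) μ)
    (hv0 : ∀ᵐ x ∂μ, Tendsto (fun n => v n x) atTop (𝓝 0)) {ε : ℝ} (hε : 0 < ε) :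
    Tendsto (fun n => ∫ x, max (|brezisLiebDefect p (v n x) (f x)| - ε * |v n x| ^ p) 0 ∂μ)
      atTop (𝓝 0) := by
  obtain ⟨C, hC⟩ := exists_abs_brezisLiebDefect_le hp.le hε
  have hIv n := (hv n).integrable_abs_rpow hp
  have hdom n : ∀ᵐ x ∂μ, ‖max (|brezisLiebDefect p (v n x) (f x)| - ε * |v n x| ^ p) 0‖ ≤
      |C| * |f x| ^ p := .of_forall fun x => by
    rw [Real.norm_eq_abs, abs_of_nonneg (le_max_right _ _)]
    refine max_le ?_ (by positivity)
    linarith [hC (v n x) (f x), mul_le_mul_of_nonneg_right (le_abs_self C)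
      (by positivity : 0 ≤ |f x| ^ p)]
  have hlim : ∀ᵐ x ∂μ, Tendsto (fun n =>
      max (|brezisLiebDefect p (v n x) (f x)| - ε * |v n x| ^ p) 0) atTop (𝓝 0) := by
    filter_upwards [hv0] with x hx
    have hvp : Tendsto (fun n => |v n x| ^ p) atTop (𝓝 0) := by
      simpa [Function.comp_def, Real.zero_rpow hp.ne'] using
        ((continuous_abs.rpow_const fun _ => Or.inr hp.le).tendsto 0).comp hx
    have hdef : Tendsto (fun n => brezisLiebDefect p (v n x) (f x)) atTop (𝓝 0) := by
      simpa [Function.comp_def, brezisLiebDefect_zero_left hp.ne'] using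
        ((continuous_brezisLiebDefect hp.le (f x)).tendsto 0).comp hx
    simpa using (hdef.abs.sub (hvp.const_mul ε)).max (tendsto_const_nhds (x := (0 : ℝ)))
  simpa using tendsto_integral_of_dominated_convergence (f := fun _ => 0) _
    (fun n => (((hv n).integrable_brezisLiebDefect hp hf).abs.sub ((hIv n).const_mul ε)).pos_part.1)
    ((hf.integrable_abs_rpow hp).const_mul |C|) hdom hlim

theorem tendsto_integral_abs_add_rpow_sub_integral_abs_rpow (hp : 0 < p) {K : ℝ}
    (hv : ∀ n, MemLp (v n) (ENNReal.ofReal p) μ) (hf : MemLp f (ENNReal.ofReal p) μ)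
    (hv0 : ∀ᵐ x ∂μ, Tendsto (fun n => v n x) atTop (𝓝 0))
    (hK : ∀ n, ∫ x, |v n x| ^ p ∂μ ≤ K) :
    Tendsto (fun n => ∫ x, |v n x + f x| ^ p ∂μ - ∫ x, |v n x| ^ p ∂μ) atTop
      (𝓝 (∫ x, |f x| ^ p ∂μ)) := by
  rw [← tendsto_sub_nhds_zero_iff]
  simp_rw [← integral_brezisLiebDefect hp (hv _) hf]
  have hK0 : 0 ≤ K := (integral_nonneg fun _ => by positivity).trans (hK 0)
  refine tendsto_nhds_zero_of_forall_abs_le_add fun ε hε => ?_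
  set η := ε / (K + 1)
  set g : ℕ → α → ℝ := fun n x => brezisLiebDefect p (v n x) (f x)
  set h : ℕ → α → ℝ := fun n x => max (|g n x| - η * |v n x| ^ p) 0
  have hIv n := (hv n).integrable_abs_rpow hp
  have hIg n : Integrable (g n) μ := (hv n).integrable_brezisLiebDefect hp hf
  have hIh n : Integrable (h n) μ := ((hIg n).abs.sub ((hIv n).const_mul η)).pos_part
  have hgh n x : |g n x| ≤ h n x + η * |v n x| ^ p := by
    linarith [le_max_left (|g n x| - η * |v n x| ^ p) 0]
  refine ⟨fun n => ∫ x, h n x ∂μ,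
    tendsto_integral_max_abs_brezisLiebDefect_sub_zero hp hv hf hv0 (by positivity), fun n => ?_⟩
  calc |∫ x, g n x ∂μ| ≤ ∫ x, |g n x| ∂μ := abs_integral_le_integral_abs
    _ ≤ ∫ x, (h n x + η * |v n x| ^ p) ∂μ :=
      integral_mono (hIg n).abs ((hIh n).add ((hIv n).const_mul η)) (hgh n)
    _ = ∫ x, h n x ∂μ + η * ∫ x, |v n x| ^ p ∂μ := by
      rw [integral_add (hIh n) ((hIv n).const_mul η), integral_const_mul]
    _ ≤ ∫ x, h n x ∂μ + η * K := by grw [hK n]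
    _ ≤ ∫ x, h n x ∂μ + ε := by
      rw [div_mul_eq_mul_div]
      gcongr
      rw [div_le_iff₀ (by positivity)]
      nlinarith

end MeasureTheory

theorem brezis_lieb_general
    {α : Type*} [MeasurableSpace α] (μ : Measure α)
    (p : ℝ) (hp : 1 ≤ p) (M : ℝ)
    (u : ℕ → α → ℝ) (f : α → ℝ)
    (hu : ∀ n, MemLp (u n) (ENNReal.ofReal p) μ)
    (hae : ∀ᵐ x ∂μ, Tendsto (fun n => u n x) atTop (nhds (f x)))
    (hbound : ∀ n, eLpNorm (u n) (ENNReal.ofReal p) μ ≤ ENNReal.ofReal M) :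
    Tendsto (fun n => (∫ x, |u n x| ^ p ∂μ) - ∫ x, |u n x - f x| ^ p ∂μ)
      atTop (nhds (∫ x, |f x| ^ p ∂μ)) := by
  have hp0 : 0 < p := by linarith
  have hum n := (hu n).aestronglyMeasurable
  have hfm : AEStronglyMeasurable f μ := aestronglyMeasurable_of_tendsto_ae atTop hum hae
  have hfLp : MemLp f (ENNReal.ofReal p) μ :=
    ⟨hfm, (Lp.eLpNorm_le_of_ae_tendsto (.of_forall hbound) hum hae).trans_lt ENNReal.ofReal_lt_top⟩
  have hbdd n : ∫ x, |(u n - f) x| ^ p ∂μ ≤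
      ((ENNReal.ofReal M).toReal + lpNorm f (ENNReal.ofReal p) μ) ^ p := by
    rw [integral_abs_rpow_eq_lpNorm_rpow hp0 ((hum n).sub hfm)]
    gcongr
    · exact lpNorm_nonneg
    refine (lpNorm_sub_le (hu n) (ENNReal.one_le_ofReal.2 hp)).trans ?_
    rw [← toReal_eLpNorm (hum n)]
    gcongr
    exacts [ENNReal.ofReal_ne_top, hbound n]
  have hv0 : ∀ᵐ x ∂μ, Tendsto (fun n => (u n - f) x) atTop (𝓝 0) :=
    hae.mono fun x hx => by simpa using hx.sub_const (f x)
  simpa using tendsto_integral_abs_add_rpow_sub_integral_abs_rpow hp0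
    (fun n => (hu n).sub hfLp) hfLp hv0 hbdd

/-- Brezis–Lieb lemma: if `u n → f` a.e. and `‖u n‖_{L^p} ≤ M` for all `n`
(`1 ≤ p < ∞`), then `‖u n‖_p^p − ‖u n − f‖_p^p → ‖f‖_p^p`. -/
theorem brezis_lieb
    {α : Type*} [MeasurableSpace α] (μ : Measure α)
    (p : ℝ) (hp : 1 ≤ p) (M : ℝ)
    (u : ℕ → α → ℝ) (f : α → ℝ)
    (hu : ∀ n, MemLp (u n) (ENNReal.ofReal p) μ)
    (hf : Measurable f)
    (hae : ∀ᵐ x ∂μ, Tendsto (fun n => u n x) atTop (nhds (f x)))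
    (hbound : ∀ n, eLpNorm (u n) (ENNReal.ofReal p) μ ≤ ENNReal.ofReal M) :
    Tendsto (fun n => (∫ x, |u n x| ^ p ∂μ) - ∫ x, |u n x - f x| ^ p ∂μ)
      atTop (nhds (∫ x, |f x| ^ p ∂μ)) :=
  brezis_lieb_general μ p hp M u f hu hae hbound
end

section
/- For nonnegative measurable functions u, v on ℝ^N vanishing at infinity, Hardy–Littlewood inequality: ∫ u v dx ≤ ∫ u* v* dx, where u*, v* are the Schwarz symmetrizations. -/
/-!
Layer-cake representation: `u v = ∫∫_{s,t>0} 1[u ≥ s] 1[v ≥ t]`, so by Tonelli `∫ u v` is the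
integral over `s, t > 0` of `|{u ≥ s} ∩ {v ≥ t}|`. Two balls centred at the origin are nested,
so their intersection is the smaller one, which has the measure of the smaller set; hence
`|A ∩ B| ≤ |A* ∩ B*|`. Reversing the layer-cake computation for the balls `{u ≥ s}*` gives the
bound, since away from the origin `x ∈ {u ≥ s}*` forces `s ≤ u*(x)` (at the origin the set of
levels may be unbounded, and `u*(0)` is then a junk value of `sSup`, but the origin is null).
-/

open MeasureTheory

/-- The open ball centered at the origin in `ℝ^N` with prescribed volume `v`. -/
noncomputable def symmBall (N : ℕ) (v : ENNReal) : Set (EuclideanSpace ℝ (Fin N)) :=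
  Metric.ball 0
    ((v.toReal /
        (volume (Metric.ball (0 : EuclideanSpace ℝ (Fin N)) 1)).toReal) ^ ((1 : ℝ) / N))

/-- The symmetrized set `S*` of a set `S ⊆ ℝ^N`: the ball of the same measure. -/
noncomputable def symmSet (N : ℕ) (S : Set (EuclideanSpace ℝ (Fin N))) :
    Set (EuclideanSpace ℝ (Fin N)) :=
  symmBall N (volume S)

/-- The Schwarz symmetrization of `u : ℝ^N → ℝ`:
`u*(x) = sup {κ : x ∈ ({u ≥ κ})*}`. -/
noncomputable def schwarzSymm (N : ℕ)
    (u : EuclideanSpace ℝ (Fin N) → ℝ) (x : EuclideanSpace ℝ (Fin N)) : ℝ :=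
  sSup {κ : ℝ | x ∈ symmSet N {y | κ ≤ u y}}

open Metric Set Filter Topology
open scoped ENNReal

lemma ENNReal.ofReal_mul_ofReal_le (a b : ℝ) :
    ENNReal.ofReal a * ENNReal.ofReal b ≤ ENNReal.ofReal (a * b) := by
  rcases le_or_gt 0 a with ha | ha
  · rw [ENNReal.ofReal_mul ha]
  · simp [ENNReal.ofReal_of_nonpos ha.le]

lemma Real.volume_restrict_Ioi_zero_Iic (a : ℝ) :
    volume.restrict (Ioi 0) (Iic a) = ENNReal.ofReal a := by
  rw [Measure.restrict_apply measurableSet_Iic, Iic_inter_Ioi, Real.volume_Ioc, sub_zero]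

lemma MeasureTheory.tendsto_measure_setOf_le_atTop {α : Type*} [MeasurableSpace α]
    {μ : Measure α} {f : α → ℝ} (hf : Measurable f) (hfin : ∃ κ, μ {y | κ ≤ f y} ≠ ∞) :
    Tendsto (fun κ => μ {y | κ ≤ f y}) atTop (𝓝 0) := by
  have hempty : ⋂ κ : ℝ, {y | κ ≤ f y} = ∅ :=
    eq_empty_of_forall_notMem fun y hy =>
      (lt_add_one (f y)).not_ge (mem_iInter.mp hy (f y + 1))
  have h := tendsto_measure_iInter_atTop (μ := μ) (s := fun κ => {y | κ ≤ f y})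
    (fun κ => (hf measurableSet_Ici).nullMeasurableSet) (fun κ κ' h y hy => h.trans hy) hfin
  rwa [hempty, measure_empty] at h

lemma MeasureTheory.lintegral_measure_inter_eq_lintegral_mul
    {α β γ : Type*} [MeasurableSpace α] [MeasurableSpace β] [MeasurableSpace γ]
    (μ : Measure α) (ν : Measure β) (ρ : Measure γ) [SFinite μ] [SFinite ν] [SFinite ρ]
    {A : β → Set α} {B : γ → Set α}
    (hA : MeasurableSet {q : α × β | q.1 ∈ A q.2})
    (hB : MeasurableSet {q : α × γ | q.1 ∈ B q.2}) :
    ∫⁻ p, μ (A p.1 ∩ B p.2) ∂(ν.prod ρ) = ∫⁻ x, ν {s | x ∈ A s} * ρ {t | x ∈ B t} ∂μ := by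
  set E : Set (α × β × γ) := {q | q.1 ∈ A q.2.1 ∧ q.1 ∈ B q.2.2}
  have hE : MeasurableSet E :=
    (hA.preimage (measurable_fst.prodMk (measurable_fst.comp measurable_snd))).inter
      (hB.preimage (measurable_fst.prodMk (measurable_snd.comp measurable_snd)))
  calc ∫⁻ p, μ (A p.1 ∩ B p.2) ∂(ν.prod ρ) = μ.prod (ν.prod ρ) E :=
        (Measure.prod_apply_symm hE).symm
    _ = ∫⁻ x, ν.prod ρ ({s | x ∈ A s} ×ˢ {t | x ∈ B t}) ∂μ := Measure.prod_apply hE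
    _ = ∫⁻ x, ν {s | x ∈ A s} * ρ {t | x ∈ B t} ∂μ := by simp only [Measure.prod_prod]

section Symmetrization

variable {N : ℕ}

lemma volume_symmBall (hN : 1 ≤ N) {V : ℝ≥0∞} (hV : V ≠ ∞) : volume (symmBall N V) = V := by
  have : Nonempty (Fin N) := ⟨⟨0, hN⟩⟩
  set ω := volume (ball (0 : EuclideanSpace ℝ (Fin N)) 1)
  have hω : ω ≠ 0 := (measure_ball_pos _ _ one_pos).ne'
  have hωtop : ω ≠ ∞ := measure_ball_lt_top.ne
  have hNne : (N : ℝ) ≠ 0 := Nat.cast_ne_zero.mpr (by omega)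
  have hbase : 0 ≤ V.toReal / ω.toReal := by positivity
  rw [symmBall, Measure.addHaar_ball _ _ (by positivity), finrank_euclideanSpace_fin,
    ← Real.rpow_natCast, ← Real.rpow_mul hbase, one_div_mul_cancel hNne, Real.rpow_one,
    ENNReal.ofReal_div_of_pos (ENNReal.toReal_pos hω hωtop), ENNReal.ofReal_toReal hV,
    ENNReal.ofReal_toReal hωtop, ENNReal.div_mul_cancel hω hωtop]

lemma symmBall_mono {V₁ V₂ : ℝ≥0∞} (h : V₁ ≤ V₂) (hV₂ : V₂ ≠ ∞) :
    symmBall N V₁ ⊆ symmBall N V₂ :=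
  ball_subset_ball <| Real.rpow_le_rpow (by positivity)
    (div_le_div_of_nonneg_right (ENNReal.toReal_mono hV₂ h) ENNReal.toReal_nonneg)
    (by positivity)

lemma volume_inter_le_volume_symmSet_inter (hN : 1 ≤ N) {A B : Set (EuclideanSpace ℝ (Fin N))}
    (hA : volume A ≠ ∞) (hB : volume B ≠ ∞) :
    volume (A ∩ B) ≤ volume (symmSet N A ∩ symmSet N B) := by
  unfold symmSet
  rcases le_total (volume A) (volume B) with h | h
  · rw [inter_eq_left.mpr (symmBall_mono h hB), volume_symmBall hN hA]
    exact measure_mono inter_subset_left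
  · rw [inter_eq_right.mpr (symmBall_mono h hA), volume_symmBall hN hB]
    exact measure_mono inter_subset_right

lemma measurableSet_setOf_mem_symmBall {β : Type*} [MeasurableSpace β] {V : β → ℝ≥0∞}
    (hV : Measurable V) :
    MeasurableSet {q : EuclideanSpace ℝ (Fin N) × β | q.1 ∈ symmBall N (V q.2)} := by
  simp only [symmBall, mem_ball_zero_iff]
  exact measurableSet_lt measurable_fst.norm (by fun_prop)

lemma volume_ball_norm_le_of_mem_symmBall (hN : 1 ≤ N) {V : ℝ≥0∞}
    {x : EuclideanSpace ℝ (Fin N)} (hx : x ∈ symmBall N V) :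
    volume (ball (0 : EuclideanSpace ℝ (Fin N)) ‖x‖) ≤ V := by
  rcases eq_or_ne V ∞ with rfl | hV
  · exact le_top
  calc volume (ball 0 ‖x‖) ≤ volume (symmBall N V) :=
        measure_mono (ball_subset_ball (mem_ball_zero_iff.mp hx).le)
    _ = V := volume_symmBall hN hV

lemma bddAbove_setOf_mem_symmSet (hN : 1 ≤ N) {u : EuclideanSpace ℝ (Fin N) → ℝ}
    (hu : Measurable u) (hfin : ∃ κ, volume {y | κ ≤ u y} ≠ ∞)
    {x : EuclideanSpace ℝ (Fin N)} (hx : x ≠ 0) :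
    BddAbove {κ | x ∈ symmSet N {y | κ ≤ u y}} := by
  have hpos : 0 < volume (ball (0 : EuclideanSpace ℝ (Fin N)) ‖x‖) :=
    measure_ball_pos _ _ (norm_pos_iff.mpr hx)
  obtain ⟨K, hK⟩ := eventually_atTop.mp
    ((tendsto_measure_setOf_le_atTop hu hfin).eventually (gt_mem_nhds hpos))
  exact ⟨K, fun κ hκ => le_of_not_gt fun hKκ =>
    (hK κ hKκ.le).not_ge (volume_ball_norm_le_of_mem_symmBall hN hκ)⟩

lemma le_schwarzSymm_of_mem_symmSet (hN : 1 ≤ N) {u : EuclideanSpace ℝ (Fin N) → ℝ}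
    (hu : Measurable u) (hfin : ∃ κ, volume {y | κ ≤ u y} ≠ ∞)
    {x : EuclideanSpace ℝ (Fin N)} (hx : x ≠ 0) {s : ℝ}
    (hs : x ∈ symmSet N {y | s ≤ u y}) : s ≤ schwarzSymm N u x :=
  le_csSup (bddAbove_setOf_mem_symmSet hN hu hfin hx) hs

lemma measure_setOf_mem_symmSet_le_schwarzSymm (hN : 1 ≤ N)
    {u : EuclideanSpace ℝ (Fin N) → ℝ} (hu : Measurable u)
    (hfin : ∃ κ, volume {y | κ ≤ u y} ≠ ∞) {x : EuclideanSpace ℝ (Fin N)} (hx : x ≠ 0) :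
    volume.restrict (Ioi 0) {s | x ∈ symmSet N {y | s ≤ u y}} ≤
      ENNReal.ofReal (schwarzSymm N u x) := by
  rw [← Real.volume_restrict_Ioi_zero_Iic]
  exact measure_mono fun s hs => le_schwarzSymm_of_mem_symmSet hN hu hfin hx hs

end Symmetrization

theorem hardy_littlewood_inequality_general
    (N : ℕ) (hN : 1 ≤ N)
    (u v : EuclideanSpace ℝ (Fin N) → ℝ)
    (hu : Measurable u) (hv : Measurable v)
    (hu0 : ∀ x, 0 ≤ u x)
    (huvanish : ∀ κ : ℝ, 0 < κ → volume {y | κ ≤ u y} < ⊤)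
    (hvvanish : ∀ κ : ℝ, 0 < κ → volume {y | κ ≤ v y} < ⊤) :
    ∫⁻ x, ENNReal.ofReal (u x * v x) ≤
      ∫⁻ x, ENNReal.ofReal (schwarzSymm N u x * schwarzSymm N v x) := by
  have : Nonempty (Fin N) := ⟨⟨0, hN⟩⟩
  set μ : Measure ℝ := volume.restrict (Ioi 0)
  have hlevel : ∀ {w : EuclideanSpace ℝ (Fin N) → ℝ}, Measurable w →
      MeasurableSet {q : EuclideanSpace ℝ (Fin N) × ℝ | q.1 ∈ symmSet N {y | q.2 ≤ w y}} :=
    fun {w} _ => measurableSet_setOf_mem_symmBall (V := fun s => volume {y | s ≤ w y})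
      (Antitone.measurable fun s t hst => measure_mono fun y hy => hst.trans hy)
  have hpos : ∀ᵐ p ∂μ.prod μ, p ∈ Ioi (0 : ℝ) ×ˢ Ioi (0 : ℝ) := by
    rw [Measure.prod_restrict]
    exact ae_restrict_mem (measurableSet_Ioi.prod measurableSet_Ioi)
  calc ∫⁻ x, ENNReal.ofReal (u x * v x)
      = ∫⁻ x, μ {s | s ≤ u x} * μ {t | t ≤ v x} := by
        simp only [ENNReal.ofReal_mul (hu0 _), ← Real.volume_restrict_Ioi_zero_Iic]; rfl
    _ = ∫⁻ p, volume ({y | p.1 ≤ u y} ∩ {y | p.2 ≤ v y}) ∂μ.prod μ :=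
        (lintegral_measure_inter_eq_lintegral_mul _ _ _ (A := fun s => {y | s ≤ u y})
          (B := fun t => {y | t ≤ v y}) (measurableSet_le measurable_snd (hu.comp measurable_fst))
          (measurableSet_le measurable_snd (hv.comp measurable_fst))).symm
    _ ≤ ∫⁻ p, volume (symmSet N {y | p.1 ≤ u y} ∩ symmSet N {y | p.2 ≤ v y}) ∂μ.prod μ :=
        lintegral_mono_ae <| hpos.mono fun p hp =>
          volume_inter_le_volume_symmSet_inter hN (huvanish _ hp.1).ne (hvvanish _ hp.2).ne
    _ = ∫⁻ x, μ {s | x ∈ symmSet N {y | s ≤ u y}} * μ {t | x ∈ symmSet N {y | t ≤ v y}} :=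
        lintegral_measure_inter_eq_lintegral_mul _ _ _ (A := fun s => symmSet N {y | s ≤ u y})
          (B := fun t => symmSet N {y | t ≤ v y}) (hlevel hu) (hlevel hv)
    _ ≤ ∫⁻ x, ENNReal.ofReal (schwarzSymm N u x) * ENNReal.ofReal (schwarzSymm N v x) :=
        lintegral_mono_ae <| (volume.ae_ne 0).mono fun x hx => mul_le_mul'
          (measure_setOf_mem_symmSet_le_schwarzSymm hN hu ⟨1, (huvanish 1 one_pos).ne⟩ hx)
          (measure_setOf_mem_symmSet_le_schwarzSymm hN hv ⟨1, (hvvanish 1 one_pos).ne⟩ hx)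
    _ ≤ ∫⁻ x, ENNReal.ofReal (schwarzSymm N u x * schwarzSymm N v x) :=
        lintegral_mono fun x => ENNReal.ofReal_mul_ofReal_le _ _

/-- Hardy–Littlewood inequality: for nonnegative measurable `u, v` on `ℝ^N`
vanishing at infinity, `∫ u v ≤ ∫ u* v*`. -/
theorem hardy_littlewood_inequality
    (N : ℕ) (hN : 1 ≤ N)
    (u v : EuclideanSpace ℝ (Fin N) → ℝ)
    (hu : Measurable u) (hv : Measurable v)
    (hu0 : ∀ x, 0 ≤ u x) (hv0 : ∀ x, 0 ≤ v x)
    (huvanish : ∀ κ : ℝ, 0 < κ → volume {y | κ ≤ u y} < ⊤)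
    (hvvanish : ∀ κ : ℝ, 0 < κ → volume {y | κ ≤ v y} < ⊤) :
    ∫⁻ x, ENNReal.ofReal (u x * v x) ≤
      ∫⁻ x, ENNReal.ofReal (schwarzSymm N u x * schwarzSymm N v x) :=
  hardy_littlewood_inequality_general N hN u v hu hv hu0 huvanish hvvanish
end

section
/- In the one-dimensional case, the subspace of even, radially non-increasing functions of W^{1,2}(ℝ) embeds compactly into L^q(ℝ) for every 2 < q < ∞: every sequence bounded in W^{1,2}(ℝ) consisting of even functions non-increasing in |x| has a subsequence converging strongly in L^q(ℝ). -/
/-!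
A bound in `W^{1,2}(ℝ)` gives two uniform controls on an even function `u` that is
non-increasing in `|x|`: the derivative bound makes `u` Hölder continuous of exponent `1/2`,
and monotonicity with the `L²` bound gives `u ≥ 0` and `u(x) |x|^(1/2) ≤ ‖u‖₂`. Hence
`u(x) ≤ 3M (1 + |x|)^(-1/2)`. Equicontinuity and a diagonal argument over a countable dense set
give a pointwise convergent subsequence, and since the envelope lies in `L^q` exactly when
`q > 2`, dominated convergence upgrades this to convergence in `L^q`.
-/

open MeasureTheory Filter Set Topology
open scoped ENNReal NNReal

theorem tendsto_eLpNorm_sub_of_dominated {α E : Type*} [MeasurableSpace α] {μ : Measure α}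
    [NormedAddCommGroup E] {p : ℝ≥0∞} {F : ℕ → α → E} {f : α → E} {g : α → ℝ}
    (hp0 : p ≠ 0) (hp : p ≠ ∞) (hF : ∀ n, AEStronglyMeasurable (F n) μ) (hg : MemLp g p μ)
    (h_bound : ∀ n, ∀ᵐ a ∂μ, ‖F n a - f a‖ ≤ g a)
    (h_lim : ∀ᵐ a ∂μ, Tendsto (fun n => F n a) atTop (𝓝 (f a))) :
    Tendsto (fun n => eLpNorm (F n - f) p μ) atTop (𝓝 0) := by
  have hf : AEStronglyMeasurable f μ := aestronglyMeasurable_of_tendsto_ae _ hF h_lim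
  have hp_pos : 0 < p.toReal := ENNReal.toReal_pos hp0 hp
  have hlint : Tendsto (fun n => ∫⁻ a, ‖F n a - f a‖ₑ ^ p.toReal ∂μ) atTop (𝓝 0) := by
    rw [← lintegral_zero]
    refine tendsto_lintegral_of_dominated_convergence' (fun a => ‖g a‖ₑ ^ p.toReal)
      (fun n => ((hF n).sub hf).enorm.pow_const _) (fun n => ?_)
      (lintegral_rpow_enorm_lt_top_of_eLpNorm_lt_top hp0 hp hg.eLpNorm_lt_top).ne ?_
    · filter_upwards [h_bound n] with a ha
      gcongr
      exact enorm_le_iff_norm_le.mpr (ha.trans (le_abs_self _))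
    · filter_upwards [h_lim] with a ha
      have h0 : Tendsto (fun n => ‖F n a - f a‖ₑ) atTop (𝓝 0) := by
        simpa using (tendsto_sub_nhds_zero_iff.mpr ha).enorm
      simpa [ENNReal.zero_rpow_of_pos hp_pos] using h0.ennrpow_const p.toReal
  simp_rw [eLpNorm_eq_lintegral_rpow_enorm_toReal hp0 hp]
  simpa [ENNReal.zero_rpow_of_pos (inv_pos.mpr hp_pos)] using hlint.ennrpow_const (1 / p.toReal)

theorem enorm_mul_measure_rpow_le_eLpNorm {α E : Type*} [MeasurableSpace α] {μ : Measure α}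
    [NormedAddCommGroup E] {p : ℝ≥0∞} {f : α → E} {c : E} {s : Set α} (hp0 : p ≠ 0)
    (hp : p ≠ ∞) (hs : MeasurableSet s) (h : ∀ x ∈ s, ‖c‖ ≤ ‖f x‖) :
    ‖c‖ₑ * μ s ^ (1 / p.toReal) ≤ eLpNorm f p μ := by
  rw [← eLpNorm_indicator_const hs hp0 hp]
  refine eLpNorm_mono fun x => ?_
  by_cases hx : x ∈ s
  · simpa [hx] using h x hx
  · simp [hx]

theorem memLp_one_add_norm_rpow_neg {E : Type*} [NormedAddCommGroup E] [NormedSpace ℝ E]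
    [FiniteDimensional ℝ E] [MeasurableSpace E] [BorelSpace E] {μ : Measure E}
    [μ.IsAddHaarMeasure] {a : ℝ} {p : ℝ≥0∞} (h : (Module.finrank ℝ E : ℝ) < a * p.toReal) :
    MemLp (fun x : E => (1 + ‖x‖) ^ (-a)) p μ := by
  have hp : p.toReal ≠ 0 := by
    rintro hp
    rw [hp, mul_zero] at h
    exact h.not_ge (Nat.cast_nonneg _)
  rw [← integrable_norm_rpow_iff (Measurable.aestronglyMeasurable (by fun_prop))
    (ENNReal.toReal_ne_zero.mp hp).1 (ENNReal.toReal_ne_zero.mp hp).2]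
  refine (integrable_one_add_norm h).congr (Eventually.of_forall fun x => ?_)
  have h1 : 0 ≤ 1 + ‖x‖ := by positivity
  simp only [Real.norm_eq_abs, abs_of_nonneg (Real.rpow_nonneg h1 _), ← Real.rpow_mul h1, neg_mul]

theorem equicontinuous_of_holderWith {ι X Y : Type*} [PseudoMetricSpace X] [PseudoMetricSpace Y]
    {C r : ℝ≥0} {F : ι → X → Y} (hr : 0 < r) (hF : ∀ i, HolderWith C r (F i)) :
    Equicontinuous F := by
  refine Metric.equicontinuous_of_continuity_modulus (fun t => C * t ^ (r : ℝ)) ?_ F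
    fun x y i => (hF i).dist_le x y
  exact (continuous_const.mul (Real.continuous_rpow_const r.2)).tendsto' 0 0
    (by simp [Real.zero_rpow (NNReal.coe_pos.mpr hr).ne'])

theorem Equicontinuous.exists_strictMono_tendsto {X Y : Type*} [TopologicalSpace X]
    [TopologicalSpace.SeparableSpace X] [MetricSpace Y] {F : ℕ → X → Y} {K : Set Y}
    (hK : IsCompact K) (hFK : ∀ n x, F n x ∈ K) (hF : Equicontinuous F) :
    ∃ φ : ℕ → ℕ, StrictMono φ ∧ ∀ x, ∃ y ∈ K, Tendsto (fun k => F (φ k) x) atTop (𝓝 y) := by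
  obtain ⟨D, hD_count, hD_dense⟩ := TopologicalSpace.exists_countable_dense X
  have : Countable D := hD_count.to_subtype
  obtain ⟨_, -, φ, hφ, hφD⟩ := (isCompact_univ_pi fun _ : D => hK).tendsto_subseq
    (x := fun n (d : D) => F n d) fun n => mem_univ_pi.mpr fun d => hFK n d
  refine ⟨φ, hφ, fun x => cauchySeq_tendsto_of_isComplete hK.isComplete (fun k => hFK _ x) ?_⟩
  rw [Metric.cauchySeq_iff]
  intro ε hε
  obtain ⟨d, hdD, hd⟩ := hD_dense.inter_nhds_nonempty
    (Metric.equicontinuousAt_iff_right.mp (hF x) (ε / 3) (by positivity))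
  obtain ⟨N, hN⟩ := Metric.cauchySeq_iff.mp
    ((tendsto_pi_nhds.mp hφD ⟨d, hdD⟩).cauchySeq) (ε / 3) (by positivity)
  refine ⟨N, fun m hm n hn => ?_⟩
  calc dist (F (φ m) x) (F (φ n) x)
      ≤ dist (F (φ m) x) (F (φ m) d) + dist (F (φ m) d) (F (φ n) d)
        + dist (F (φ n) d) (F (φ n) x) := dist_triangle4 _ _ _ _
    _ < ε / 3 + ε / 3 + ε / 3 := by
        gcongr
        · exact hd (φ m)
        · exact hN m hm n hn
        · rw [dist_comm]; exact hd (φ n)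
    _ = ε := by ring

section RealLine

variable {f : ℝ → ℝ}

theorem holderWith_of_eLpNorm_deriv_le {C : ℝ≥0} (hf : Differentiable ℝ f)
    (hC : eLpNorm (deriv f) 2 volume ≤ C) : HolderWith C 2⁻¹ f := by
  have hf' : MemLp (deriv f) 2 volume :=
    ⟨(measurable_deriv f).aestronglyMeasurable, hC.trans_lt ENNReal.coe_lt_top⟩
  suffices h : ∀ a b, a ≤ b → edist (f a) (f b) ≤ C * edist a b ^ ((2⁻¹ : ℝ≥0) : ℝ) by
    intro a b
    rcases le_total a b with hab | hab
    · exact h a b hab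
    · rw [edist_comm, edist_comm a]; exact h b a hab
  intro a b hab
  have : IsFiniteMeasure (volume.restrict (Ioc a b)) := isFiniteMeasure_restrict.mpr (by simp)
  have hint : IntegrableOn (deriv f) (Ioc a b) volume :=
    memLp_one_iff_integrable.mp ((hf'.restrict _).mono_exponent (by norm_num))
  calc edist (f a) (f b) = ‖∫ x in Ioc a b, deriv f x‖ₑ := by
        rw [edist_comm, edist_eq_enorm_sub, ← intervalIntegral.integral_of_le hab,
          intervalIntegral.integral_deriv_eq_sub (fun x _ => hf x)
            ((intervalIntegrable_iff_integrableOn_Ioc_of_le hab).mpr hint)]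
    _ ≤ eLpNorm (deriv f) 1 (volume.restrict (Ioc a b)) := by
        rw [eLpNorm_one_eq_lintegral_enorm]; exact enorm_integral_le_lintegral_enorm _
    _ ≤ eLpNorm (deriv f) 2 (volume.restrict (Ioc a b)) *
          volume.restrict (Ioc a b) univ ^ (1 / (1 : ℝ≥0∞).toReal - 1 / (2 : ℝ≥0∞).toReal) :=
        eLpNorm_le_eLpNorm_mul_rpow_measure_univ (by norm_num) hf'.1.restrict
    _ ≤ C * edist a b ^ ((2⁻¹ : ℝ≥0) : ℝ) := by
        gcongr
        · exact (eLpNorm_mono_measure _ Measure.restrict_le_self).trans hC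
        · rw [Measure.restrict_apply_univ, Real.volume_Ioc, edist_dist, Real.dist_eq,
            abs_sub_comm, abs_of_nonneg (sub_nonneg.mpr hab)]
          norm_num

theorem AntitoneOn.nonneg_of_eLpNorm_ne_top {p : ℝ≥0∞} (hf : AntitoneOn f (Ici 0)) (hp0 : p ≠ 0)
    (hp : p ≠ ∞) (hfp : eLpNorm f p volume ≠ ∞) {x : ℝ} (hx : 0 ≤ x) : 0 ≤ f x := by
  by_contra! hfx
  refine hfp (top_le_iff.mp ?_)
  calc ∞ = ‖f x‖ₑ * volume (Ici x) ^ (1 / p.toReal) := by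
        rw [Real.volume_Ici, ENNReal.top_rpow_of_pos (by simp [ENNReal.toReal_pos hp0 hp]),
          ENNReal.mul_top (by simpa using hfx.ne)]
    _ ≤ eLpNorm f p volume := enorm_mul_measure_rpow_le_eLpNorm hp0 hp measurableSet_Ici
        fun y hy => by
          have := hf hx (hx.trans hy) hy
          rw [Real.norm_of_nonpos hfx.le, Real.norm_of_nonpos (this.trans hfx.le)]
          linarith

theorem AntitoneOn.mul_rpow_le_of_eLpNorm_le {p : ℝ≥0∞} (hf : AntitoneOn f (Ici 0)) (hp0 : p ≠ 0)
    (hp : p ≠ ∞) {C : ℝ≥0} (hfp : eLpNorm f p volume ≤ C) {x : ℝ} (hx : 0 ≤ x)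
    (hfx : 0 ≤ f x) : f x * x ^ (1 / p.toReal) ≤ C := by
  have h : ‖f x‖ₑ * volume (Ioc 0 x) ^ (1 / p.toReal) ≤ C :=
    (enorm_mul_measure_rpow_le_eLpNorm hp0 hp measurableSet_Ioc fun y hy => by
      rw [Real.norm_of_nonneg hfx, Real.norm_of_nonneg (hfx.trans (hf hy.1.le hx hy.2))]
      exact hf hy.1.le hx hy.2).trans hfp
  rw [Real.volume_Ioc, sub_zero, Real.enorm_of_nonneg hfx, ENNReal.ofReal_rpow_of_nonneg hx
    (by positivity), ← ENNReal.ofReal_mul hfx, ← ENNReal.ofReal_coe_nnreal] at h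
  exact (ENNReal.ofReal_le_ofReal_iff C.2).mp h

theorem Function.Even.mem_Icc_of_antitoneOn {C : ℝ≥0} (heven : f.Even)
    (hf : AntitoneOn f (Ici 0)) (hf2 : eLpNorm f 2 volume ≤ C) (hfC : HolderWith C 2⁻¹ f)
    (x : ℝ) : f x ∈ Icc 0 (3 * C * (1 + |x|) ^ (-(1 / 2 : ℝ))) := by
  have hnn : ∀ y, 0 ≤ y → 0 ≤ f y := fun y =>
    hf.nonneg_of_eLpNorm_ne_top two_ne_zero ENNReal.ofNat_ne_top
      (hf2.trans_lt ENNReal.coe_lt_top).ne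
  have hdecay : ∀ y, 0 ≤ y → f y * √y ≤ C := fun y hy => by
    simpa [Real.sqrt_eq_rpow] using
      hf.mul_rpow_le_of_eLpNorm_le two_ne_zero ENNReal.ofNat_ne_top hf2 hy (hnn y hy)
  have hf0 : f 0 ≤ 2 * C := by
    have h1 := hdecay 1 zero_le_one
    have h2 := hfC.dist_le 0 1
    simp only [Real.sqrt_one, mul_one, Real.dist_eq, zero_sub, abs_neg, abs_one,
      Real.one_rpow] at h1 h2
    linarith [le_abs_self (f 0 - f 1)]
  have hx : f x = f |x| := by rcases abs_choice x with h | h <;> rw [h]; exact (heven x).symm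
  rw [hx]
  have hy := abs_nonneg x
  generalize |x| = y at hy ⊢
  refine ⟨hnn y hy, ?_⟩
  have hsqrt : √(1 + y) ≤ 1 + √y := Real.sqrt_le_iff.mpr
    ⟨by positivity, by nlinarith [Real.sq_sqrt hy, Real.sqrt_nonneg y]⟩
  rw [Real.rpow_neg (by positivity), ← Real.sqrt_eq_rpow, ← div_eq_mul_inv,
    le_div_iff₀ (by positivity)]
  calc f y * √(1 + y) ≤ f y * (1 + √y) := by gcongr; exact hnn y hy
    _ ≤ 2 * C + C := by linarith [hdecay y hy, hf self_mem_Ici hy hy]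
    _ = 3 * C := by ring

end RealLine

theorem radial_decreasing_compact_embedding_general
    (q : ℝ) (hq : 2 < q)
    (u : ℕ → ℝ → ℝ) (M : ℝ)
    (heven : ∀ n, ∀ x : ℝ, u n (-x) = u n x)
    (hmono : ∀ n, ∀ x y : ℝ, 0 ≤ x → x ≤ y → u n y ≤ u n x)
    (hdiff : ∀ n, Differentiable ℝ (u n))
    (hbdd : ∀ n, eLpNorm (u n) 2 (volume : Measure ℝ) ≤ ENNReal.ofReal M ∧
      eLpNorm (deriv (u n)) 2 (volume : Measure ℝ) ≤ ENNReal.ofReal M) :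
    ∃ (φ : ℕ → ℕ) (v : ℝ → ℝ), StrictMono φ ∧
      Tendsto (fun k => eLpNorm (u (φ k) - v) (ENNReal.ofReal q) volume)
        atTop (nhds 0) := by
  -- `ENNReal.ofReal M` is `↑M.toNNReal` by definition, so `hbdd` bounds the norms by `C`.
  set C := M.toNNReal
  set g : ℝ → ℝ := fun x => 3 * C * (1 + |x|) ^ (-(1 / 2 : ℝ))
  have hholder : ∀ n, HolderWith C 2⁻¹ (u n) := fun n =>
    holderWith_of_eLpNorm_deriv_le (hdiff n) (hbdd n).2
  have henv : ∀ n x, u n x ∈ Icc 0 (g x) := fun n =>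
    Function.Even.mem_Icc_of_antitoneOn (heven n) (fun x hx y _ hxy => hmono n x y hx hxy)
      (hbdd n).1 (hholder n)
  have hK : ∀ n x, u n x ∈ Icc 0 (3 * C : ℝ) := fun n x =>
    Icc_subset_Icc_right (mul_le_of_le_one_right (by positivity)
      (Real.rpow_le_one_of_one_le_of_nonpos (by simp) (by norm_num))) (henv n x)
  obtain ⟨φ, hφ, hlim⟩ :=
    (equicontinuous_of_holderWith (by norm_num) hholder).exists_strictMono_tendsto isCompact_Icc hK
  choose v _ hv using hlim
  have hv_env : ∀ x, v x ∈ Icc 0 (g x) := fun x =>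
    isClosed_Icc.mem_of_tendsto (hv x) (Eventually.of_forall fun k => henv _ x)
  have hq0 : 0 < q := by linarith
  have hg : MemLp g (ENNReal.ofReal q) volume := by
    have h := (memLp_one_add_norm_rpow_neg (E := ℝ) (μ := volume) (a := 1 / 2)
      (p := ENNReal.ofReal q) (by simp [hq0.le]; linarith)).const_mul (3 * C : ℝ)
    simpa only [Real.norm_eq_abs] using h
  refine ⟨φ, v, hφ, tendsto_eLpNorm_sub_of_dominated (by simpa using hq0) ENNReal.ofReal_ne_top
    (fun k => (hdiff _).continuous.aestronglyMeasurable) hg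
    (fun k => ae_of_all _ fun x => ?_) (ae_of_all _ hv)⟩
  exact abs_sub_le_of_nonneg_of_le (henv _ x).1 (henv _ x).2 (hv_env x).1 (hv_env x).2

/-- Compact embedding of even, radially non-increasing functions of `W^{1,2}(ℝ)`
into `L^q(ℝ)`, `2 < q < ∞`: any bounded sequence of such functions has a
subsequence converging strongly in `L^q(ℝ)`. -/
theorem radial_decreasing_compact_embedding
    (q : ℝ) (hq : 2 < q)
    (u : ℕ → ℝ → ℝ) (M : ℝ)
    (heven : ∀ n, ∀ x : ℝ, u n (-x) = u n x)
    (hmono : ∀ n, ∀ x y : ℝ, 0 ≤ x → x ≤ y → u n y ≤ u n x)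
    (hdiff : ∀ n, Differentiable ℝ (u n))
    (hmem : ∀ n, MemLp (u n) 2 (volume : Measure ℝ))
    (hmem' : ∀ n, MemLp (deriv (u n)) 2 (volume : Measure ℝ))
    (hbdd : ∀ n, eLpNorm (u n) 2 (volume : Measure ℝ) ≤ ENNReal.ofReal M ∧
      eLpNorm (deriv (u n)) 2 (volume : Measure ℝ) ≤ ENNReal.ofReal M) :
    ∃ (φ : ℕ → ℕ) (v : ℝ → ℝ), StrictMono φ ∧
      Tendsto (fun k => eLpNorm (u (φ k) - v) (ENNReal.ofReal q) volume)
        atTop (nhds 0) :=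
  radial_decreasing_compact_embedding_general q hq u M heven hmono hdiff hbdd
end

section
/- Let E be a real Hilbert space, J ∈ C²(E, ℝ), and define G(u) = ⟨J'(u), u⟩ and the Nehari set M = {u ∈ E \ {0} : G(u) = 0}. Assume M is nonempty, there exists r > 0 with B_r(0) ∩ M = ∅, and ⟨G'(u), u⟩ ≠ 0 for all u ∈ M. Then for u ∈ M: the constrained gradient of J on M vanishes at u if and only if J'(u) = 0 (M is a natural constraint). -/
open scoped RealInnerProductSpace

/-- The Nehari manifold `M = {u ≠ 0 : ⟨J'(u), u⟩ = 0}` is a natural constraint: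
if `M` is nonempty, bounded away from `0`, and `⟨G'(u), u⟩ ≠ 0` on `M` (where
`G(u) = ⟨J'(u), u⟩`), then for `u ∈ M` the constrained gradient
`J'(u) − λ_u G'(u)` (with `λ_u = ⟨J'(u), G'(u)⟩/‖G'(u)‖²`) vanishes iff
`J'(u) = 0`. -/
theorem nehari_natural_constraint
    {E : Type*} [NormedAddCommGroup E] [InnerProductSpace ℝ E] [CompleteSpace E]
    (J : E → ℝ) (hJC2 : ContDiff ℝ 2 J)
    (J' G' : E → E) (G : E → ℝ)
    (hJ' : ∀ u : E, HasGradientAt J (J' u) u)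
    (hG : ∀ u : E, G u = ⟪J' u, u⟫)
    (hG' : ∀ u : E, HasGradientAt G (G' u) u)
    (M : Set E) (hM : M = {u : E | u ≠ 0 ∧ G u = 0})
    (hMne : M.Nonempty)
    (hball : ∃ r : ℝ, 0 < r ∧ Metric.ball (0 : E) r ∩ M = ∅)
    (hnondeg : ∀ u ∈ M, ⟪G' u, u⟫ ≠ 0)
    (u : E) (hu : u ∈ M) :
    J' u - (⟪J' u, G' u⟫ / ‖G' u‖ ^ 2) • G' u = 0 ↔ J' u = 0 := by
  obtain ⟨hu0, huG⟩ := hM ▸ hu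
  have hJu : ⟪J' u, u⟫ = 0 := by rw [← hG]; exact huG
  constructor
  · intro h
    have h' : J' u = (⟪J' u, G' u⟫ / ‖G' u‖ ^ 2) • G' u := sub_eq_zero.mp h
    have : (⟪J' u, G' u⟫ / ‖G' u‖ ^ 2) * ⟪G' u, u⟫ = 0 := by
      rw [← real_inner_smul_left, ← h', hJu]
    have hl : ⟪J' u, G' u⟫ / ‖G' u‖ ^ 2 = 0 :=
      (mul_eq_zero.mp this).resolve_right (hnondeg u hu)
    rw [h', hl, zero_smul]
  · intro h
    rw [h, inner_zero_left, zero_div, zero_smul, sub_zero]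
end
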